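/- β-reduction on well-typed terms of the λΠ-calculus is strongly normalizing and confluent; consequently each well-typed term has a unique normal form, and two well-typed terms of the same type are β-equivalent if and only if they have the same normal form. -/

import Mathlib

namespace LamPi

/-- Terms of the λΠ-calculus (de Bruijn indices). -/
inductive Tm : Type
  | type | kind
  | var (n : ℕ)
  | app (t u : Tm)
  | lam (A b : Tm)
  | pi  (A B : Tm)
deriving DecidableEq

/-- Lift free variables ≥ d by one. -/
def lift (d : ℕ) : Tm → Tm
  | .type => .type
  | .kind => .kind
  | .var n => if n < d then .var n else .var (n + 1)
  | .app t u => .app (lift d t) (lift d u)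
  | .lam A b => .lam (lift d A) (lift (d + 1) b)
  | .pi A B => .pi (lift d A) (lift (d + 1) B)

def liftN (k : ℕ) (t : Tm) : Tm := (lift 0)^[k] t

/-- Substitute u for the variable k. -/
def subst (k : ℕ) (u : Tm) : Tm → Tm
  | .type => .type
  | .kind => .kind
  | .var n => if n = k then u else if k < n then .var (n - 1) else .var n
  | .app t t' => .app (subst k u t) (subst k u t')
  | .lam A b => .lam (subst k u A) (subst (k + 1) (lift 0 u) b)
  | .pi A B => .pi (subst k u A) (subst (k + 1) (lift 0 u) B)

/-- One-step β-reduction. -/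
inductive Step : Tm → Tm → Prop
  | beta (A b u) : Step (.app (.lam A b) u) (subst 0 u b)
  | appL {t t'} (u) : Step t t' → Step (.app t u) (.app t' u)
  | appR (t) {u u'} : Step u u' → Step (.app t u) (.app t u')
  | lamA {A A'} (b) : Step A A' → Step (.lam A b) (.lam A' b)
  | lamB (A) {b b'} : Step b b' → Step (.lam A b) (.lam A b')
  | piA {A A'} (B) : Step A A' → Step (.pi A B) (.pi A' B)
  | piB (A) {B B'} : Step B B' → Step (.pi A B) (.pi A B')

/-- Many-step β-reduction. -/
def Red : Tm → Tm → Prop := Relation.ReflTransGen Step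

/-- β-equivalence ≅. -/
def Conv : Tm → Tm → Prop := Relation.EqvGen Step

/-- A term is normal if it contains no β-redex. -/
def Normal (t : Tm) : Prop := ∀ u, ¬ Step t u

def IsSort (s : Tm) : Prop := s = .type ∨ s = .kind

mutual
  /-- Well-formed contexts (head of the list is the most recent declaration). -/
  inductive WF : List Tm → Prop
    | nil : WF []
    | cons {Γ A s} : Typing Γ A s → IsSort s → WF (A :: Γ)
  /-- The typing judgement Γ ⊢ t : T of the λΠ-calculus. -/
  inductive Typing : List Tm → Tm → Tm → Prop
    | sort {Γ} : WF Γ → Typing Γ .type .kind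
    | var {Γ n A} : WF Γ → Γ[n]? = some A → Typing Γ (.var n) (liftN (n + 1) A)
    | pi {Γ A B s} : Typing Γ A .type → Typing (A :: Γ) B s → IsSort s →
        Typing Γ (.pi A B) s
    | lam {Γ A B b s} : Typing Γ (.pi A B) s → IsSort s → Typing (A :: Γ) b B →
        Typing Γ (.lam A b) (.pi A B)
    | app {Γ t u A B} : Typing Γ t (.pi A B) → Typing Γ u A →
        Typing Γ (.app t u) (subst 0 u B)
    | conv {Γ t A B s} : Typing Γ t A → Typing Γ A s → Typing Γ B s → IsSort s →
        Conv A B → Typing Γ t B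
end

/-- t is an object in Γ : it has a type T with Γ ⊢ T : Type. -/
def IsObject (Γ : List Tm) (t : Tm) : Prop := ∃ T, Typing Γ t T ∧ Typing Γ T .type

/-- The context Γ = [T:Type; a:T→T; b:T→T; c:T; d:T; P:T→Type; F:Πx:T.((P x)→T)].
Most recent declaration first: F = var 0, P = var 1, d = var 2, c = var 3,
b = var 4, a = var 5, T = var 6. -/
def Ctx0 : List Tm :=
  [ .pi (.var 5) (.pi (.app (.var 1) (.var 0)) (.var 7)),  -- F : Πx:T.((P x) → T)
    .pi (.var 4) .type,                                    -- P : T → Type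
    .var 3,                                                -- d : T
    .var 2,                                                -- c : T
    .pi (.var 1) (.var 2),                                 -- b : T → T
    .pi (.var 0) (.var 1),                                 -- a : T → T
    .type ]                                                -- T : Type

/-- The two-letter alphabet {A, B}. -/
inductive AB : Type
  | A | B
deriving DecidableEq

instance : Primcodable AB :=
  Primcodable.ofEquiv Bool
    ⟨fun x => match x with | .A => false | .B => true,
     fun b => if b then .B else .A,
     fun x => by cases x <;> rfl, fun b => by cases b <;> rfl⟩

/-- The encoding φ̂ of a word φ over {A,B} as a term of type T → T in Ctx0:
ε̂ = λy:T.y, (Aφ)̂ = λy:T.(a (φ̂ y)), (Bφ)̂ = λy:T.(b (φ̂ y)). -/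
def hat : List AB → Tm
  | [] => .lam (.var 6) (.var 0)
  | .A :: w => .lam (.var 6) (.app (.var 6) (.app (lift 0 (hat w)) (.var 0)))
  | .B :: w => .lam (.var 6) (.app (.var 5) (.app (lift 0 (hat w)) (.var 0)))

/-- λy:T.y in Ctx0. -/
def idT : Tm := .lam (.var 6) (.var 0)

/-- Iterated application (h u₁ ... uₙ). -/
def appList : Tm → List Tm → Tm
  | h, [] => h
  | h, u :: us => appList (.app h u) us

/-- Iterated abstraction λx₁:T₁....λxₙ:Tₙ.b. -/
def absList : List Tm → Tm → Tm
  | [], b => b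
  | A :: Ts, b => .lam A (absList Ts b)

/-- A solution of the Post problem: a nonempty sequence of indices whose
φ-concatenation equals its ψ-concatenation. -/
def HasSolution (pcp : List (List AB × List AB)) : Prop :=
  ∃ is : List (Fin pcp.length), is ≠ [] ∧
    (is.map fun i => (pcp.get i).1).flatten = (is.map fun i => (pcp.get i).2).flatten

/-- Head symbols: a free variable, a top variable (bound by one of the leading
abstractions), a sort, or (by convention) Π. -/
inductive HeadSym : Type
  | fvar (n : ℕ) | bvar (i : ℕ) | sType | sKind | hpi
deriving DecidableEq

def headSymbolAux : ℕ → Tm → HeadSym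
  | d, .lam _ b => headSymbolAux (d + 1) b
  | d, .app t _ => headSymbolAux d t
  | _, .pi _ _ => .hpi
  | _, .type => .sType
  | _, .kind => .sKind
  | d, .var n => if n < d then .bvar (d - 1 - n) else .fvar (n - d)

/-- The head symbol of a term (`bvar i` means the i-th top variable). -/
def headSymbol (t : Tm) : HeadSym := headSymbolAux 0 t

/-- (T→T) → ... → (T→T) → T with n arguments, where T is the variable k. -/
def nArr (k : ℕ) : ℕ → Tm
  | 0 => .var k
  | n + 1 => .pi (.pi (.var k) (.var (k + 1))) (nArr (k + 1) n)

/-- (T→T) → ... → (T→T) → Type with n arguments, where T is the variable k. -/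
def nArrTy (k : ℕ) : ℕ → Tm
  | 0 => .type
  | n + 1 => .pi (.pi (.var k) (.var (k + 1))) (nArrTy (k + 1) n)

/-- λx₁:T→T....λxₙ:T→T.body, where T is the variable k. -/
def lamChain (k : ℕ) : ℕ → Tm → Tm
  | 0, body => body
  | n + 1, body => .lam (.pi (.var k) (.var (k + 1))) (lamChain (k + 1) n body)

/-- Πx₁:T→T....Πxₙ:T→T.body, where T is the variable k. -/
def piChain (k : ℕ) : ℕ → Tm → Tm
  | 0, body => body
  | n + 1, body => .pi (.pi (.var k) (.var (k + 1))) (piChain (k + 1) n body)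

/-- (x_{i₁} (... (x_{iₚ} c)...)) under n leading binders in Ctx0: the j-th top
variable (0-indexed) is de Bruijn variable n-1-j, and c is variable 3+n. -/
def spine (n : ℕ) (is : List ℕ) : Tm :=
  is.foldr (fun i acc => .app (.var (n - 1 - i)) acc) (.var (3 + n))

/-- Pure (untyped) λ-terms. `fvar j` denotes the j-th free variable counted from
the bottom of the ambient context (so it is stable under context extension);
`bvar` is a de Bruijn index for bound variables. -/
inductive PTm : Type
  | bvar (n : ℕ) | fvar (n : ℕ) | app (t u : PTm) | lam (t : PTm)
deriving DecidableEq

/-- The content |t| of a term: erase all type annotations. L is the length of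
the ambient context, d the current binding depth. -/
def eraseAux (L : ℕ) : ℕ → Tm → PTm
  | d, .var n => if n < d then .bvar n else .fvar (L - 1 - (n - d))
  | d, .app t u => .app (eraseAux L d t) (eraseAux L d u)
  | d, .lam _ b => .lam (eraseAux L (d + 1) b)
  | _, _ => .bvar 0

def erase (L : ℕ) (t : Tm) : PTm := eraseAux L 0 t

/-- A pure term p is typable in Γ if some well-typed object t' in an extension
Δ ++ Γ of Γ has content p. -/
def Typable (Γ : List Tm) (p : PTm) : Prop :=
  ∃ (Δ : List Tm) (t : Tm), IsObject (Δ ++ Γ) t ∧ erase (Δ.length + Γ.length) t = p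

/-- An injective Gödel numbering of pure terms. -/
def PTm.enc : PTm → ℕ
  | .bvar n => Nat.pair 0 n
  | .fvar n => Nat.pair 1 n
  | .app t u => Nat.pair 2 (Nat.pair t.enc u.enc)
  | .lam t => Nat.pair 3 t.enc

/-- The untyped erasure φ̃ = |φ̂| of the encoding of a word (in Ctx0:
a = fvar 1, b = fvar 2). -/
def tilde : List AB → PTm
  | [] => .lam (.bvar 0)
  | .A :: w => .lam (.app (.fvar 1) (.app (tilde w) (.bvar 0)))
  | .B :: w => .lam (.app (.fvar 2) (.app (tilde w) (.bvar 0)))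

def pAppList : PTm → List PTm → PTm
  | h, [] => h
  | h, u :: us => pAppList (.app h u) us

/-- The pure term t = λf.λg.λh.(f (g a ... a) (h (g φ̃₁ ... φ̃ₙ)) (h (g ψ̃₁ ... ψ̃ₙ))
(F c (g (λy.y) ... (λy.y))) (F d (g (λy.d) ... (λy.d)))) associated to a Post
problem (in Ctx0: a = fvar 1, c = fvar 3, d = fvar 4, F = fvar 6;
f = bvar 2, g = bvar 1, h = bvar 0 under the three abstractions). -/
def postTerm (pcp : List (List AB × List AB)) : PTm :=
  let n := pcp.length
  .lam (.lam (.lam (pAppList (.bvar 2)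
    [ pAppList (.bvar 1) (List.replicate n (.fvar 1)),
      .app (.bvar 0) (pAppList (.bvar 1) (pcp.map fun pr => tilde pr.1)),
      .app (.bvar 0) (pAppList (.bvar 1) (pcp.map fun pr => tilde pr.2)),
      .app (.app (.fvar 6) (.fvar 3)) (pAppList (.bvar 1) (List.replicate n (.lam (.bvar 0)))),
      .app (.app (.fvar 6) (.fvar 4)) (pAppList (.bvar 1) (List.replicate n (.lam (.fvar 4)))) ])))

/-! ### Simply typed λ-calculus -/

/-- Simple types over one base type T. -/
inductive STy : Type
  | base | arr (A B : STy)
deriving DecidableEq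

/-- Curry-style simple typing of pure terms: Φ types the free variables
(fvar j has type Φ.get? j), Γ the bound ones. -/
inductive SJC : List STy → List STy → PTm → STy → Prop
  | bvar {Φ Γ n A} : Γ[n]? = some A → SJC Φ Γ (.bvar n) A
  | fvar {Φ Γ n A} : Φ[n]? = some A → SJC Φ Γ (.fvar n) A
  | app {Φ Γ t u A B} : SJC Φ Γ t (.arr A B) → SJC Φ Γ u A → SJC Φ Γ (.app t u) B
  | lam {Φ Γ t A B} : SJC Φ (A :: Γ) t B → SJC Φ Γ (.lam t) (.arr A B)

/-- A pure term is typable in the simply typed λ-calculus. -/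
def STypable (p : PTm) : Prop := ∃ Φ A, SJC Φ [] p A

/-- Church-style simply typed terms with constants a, b : T→T and c, d : T. -/
inductive STm : Type
  | var (n : ℕ) | ca | cb | cc | cd | app (t u : STm) | lam (A : STy) (b : STm)
deriving DecidableEq

def slift (d : ℕ) : STm → STm
  | .var n => if n < d then .var n else .var (n + 1)
  | .ca => .ca | .cb => .cb | .cc => .cc | .cd => .cd
  | .app t u => .app (slift d t) (slift d u)
  | .lam A b => .lam A (slift (d + 1) b)

def ssubst (k : ℕ) (u : STm) : STm → STm
  | .var n => if n = k then u else if k < n then .var (n - 1) else .var n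
  | .ca => .ca | .cb => .cb | .cc => .cc | .cd => .cd
  | .app t t' => .app (ssubst k u t) (ssubst k u t')
  | .lam A b => .lam A (ssubst (k + 1) (slift 0 u) b)

inductive SStep : STm → STm → Prop
  | beta (A b u) : SStep (.app (.lam A b) u) (ssubst 0 u b)
  | appL {t t'} (u) : SStep t t' → SStep (.app t u) (.app t' u)
  | appR (t) {u u'} : SStep u u' → SStep (.app t u) (.app t u')
  | lamB (A) {b b'} : SStep b b' → SStep (.lam A b) (.lam A b')

def SConv : STm → STm → Prop := Relation.EqvGen SStep

inductive ST : List STy → STm → STy → Prop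
  | var {Γ n A} : Γ[n]? = some A → ST Γ (.var n) A
  | ca {Γ} : ST Γ .ca (.arr .base .base)
  | cb {Γ} : ST Γ .cb (.arr .base .base)
  | cc {Γ} : ST Γ .cc .base
  | cd {Γ} : ST Γ .cd .base
  | app {Γ t u A B} : ST Γ t (.arr A B) → ST Γ u A → ST Γ (.app t u) B
  | lam {Γ A B b} : ST (A :: Γ) b B → ST Γ (.lam A b) (.arr A B)

/-- The third-order type (T→T) → ... → (T→T) → T with n arguments. -/
def nSTy : ℕ → STy
  | 0 => .base
  | n + 1 => .arr (.arr .base .base) (nSTy n)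

def sAppList : STm → List STm → STm
  | h, [] => h
  | h, u :: us => sAppList (.app h u) us

def STm.enc : STm → ℕ
  | .var n => Nat.pair 0 n
  | .ca => Nat.pair 1 0
  | .cb => Nat.pair 1 1
  | .cc => Nat.pair 1 2
  | .cd => Nat.pair 1 3
  | .app t u => Nat.pair 2 (Nat.pair t.enc u.enc)
  | .lam _ b => Nat.pair 3 b.enc

def encList (l : List ℕ) : ℕ := l.foldr (fun a b => Nat.pair a b + 1) 0

/-- Gödel numbering of a unification problem
(f t₁...tₙ) = (f t'₁...t'ₙ), (f u₁...uₙ) = u', (f v₁...vₙ) = v'. -/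
def encP (n : ℕ) (ts ts' us vs : List STm) (u' v' : STm) : ℕ :=
  Nat.pair n (Nat.pair (encList (ts.map STm.enc)) (Nat.pair (encList (ts'.map STm.enc))
    (Nat.pair (encList (us.map STm.enc)) (Nat.pair (encList (vs.map STm.enc))
      (Nat.pair u'.enc v'.enc)))))

/-- The unification system has a common solution for f. -/
def HasUnifSolution (n : ℕ) (ts ts' us vs : List STm) (u' v' : STm) : Prop :=
  ∃ f : STm, ST [] f (nSTy n) ∧
    SConv (sAppList f ts) (sAppList f ts') ∧
    SConv (sAppList f us) u' ∧
    SConv (sAppList f vs) v'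

end LamPi

namespace LamPi

/-! ### A. Renaming / substitution algebra -/

def upr (f : ℕ → ℕ) : ℕ → ℕ
  | 0 => 0
  | n+1 => f n + 1

def ren (f : ℕ → ℕ) : Tm → Tm
  | .type => .type
  | .kind => .kind
  | .var n => .var (f n)
  | .app t u => .app (ren f t) (ren f u)
  | .lam A b => .lam (ren f A) (ren (upr f) b)
  | .pi A B => .pi (ren f A) (ren (upr f) B)

def up (σ : ℕ → Tm) : ℕ → Tm
  | 0 => .var 0
  | n+1 => lift 0 (σ n)

def msubst (σ : ℕ → Tm) : Tm → Tm
  | .type => .type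
  | .kind => .kind
  | .var n => σ n
  | .app t u => .app (msubst σ t) (msubst σ u)
  | .lam A b => .lam (msubst σ A) (msubst (up σ) b)
  | .pi A B => .pi (msubst σ A) (msubst (up σ) B)

@[simp] lemma upr_zero (f : ℕ → ℕ) : upr f 0 = 0 := rfl
@[simp] lemma upr_succ (f : ℕ → ℕ) (n : ℕ) : upr f (n+1) = f n + 1 := rfl
@[simp] lemma up_zero (σ : ℕ → Tm) : up σ 0 = .var 0 := rfl
@[simp] lemma up_succ (σ : ℕ → Tm) (n : ℕ) : up σ (n+1) = lift 0 (σ n) := rfl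

lemma upr_ext {f g : ℕ → ℕ} (h : ∀ n, f n = g n) : ∀ n, upr f n = upr g n := by
  intro n; cases n <;> simp [h]

lemma up_ext {σ τ : ℕ → Tm} (h : ∀ n, σ n = τ n) : ∀ n, up σ n = up τ n := by
  intro n; cases n <;> simp [h]

lemma ren_ext {f g : ℕ → ℕ} (t : Tm) (h : ∀ n, f n = g n) : ren f t = ren g t := by
  induction t generalizing f g with
  | type => rfl
  | kind => rfl
  | var n => simp [ren, h]
  | app t u iht ihu => simp [ren, iht h, ihu h]
  | lam A b ihA ihb => simp [ren, ihA h, ihb (upr_ext h)]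
  | pi A B ihA ihB => simp [ren, ihA h, ihB (upr_ext h)]

lemma msubst_ext {σ τ : ℕ → Tm} (t : Tm) (h : ∀ n, σ n = τ n) : msubst σ t = msubst τ t := by
  induction t generalizing σ τ with
  | type => rfl
  | kind => rfl
  | var n => simp [msubst, h]
  | app t u iht ihu => simp [msubst, iht h, ihu h]
  | lam A b ihA ihb => simp [msubst, ihA h, ihb (up_ext h)]
  | pi A B ihA ihB => simp [msubst, ihA h, ihB (up_ext h)]

def liftF (d : ℕ) : ℕ → ℕ := fun n => if n < d then n else n + 1

lemma upr_liftF (d : ℕ) : ∀ n, upr (liftF d) n = liftF (d+1) n := by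
  intro n; cases n with
  | zero => simp [liftF]
  | succ n => simp only [upr_succ, liftF]; split <;> split <;> omega

lemma lift_eq_ren (d : ℕ) (t : Tm) : lift d t = ren (liftF d) t := by
  induction t generalizing d with
  | type => rfl
  | kind => rfl
  | var n => simp only [lift, ren, liftF]; split <;> rfl
  | app t u iht ihu => simp [lift, ren, iht, ihu]
  | lam A b ihA ihb =>
      simp [lift, ren, ihA, ihb]; exact ren_ext b fun n => (upr_liftF d n).symm
  | pi A B ihA ihB =>
      simp [lift, ren, ihA, ihB]; exact ren_ext B fun n => (upr_liftF d n).symm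

def sub1 (k : ℕ) (u : Tm) : ℕ → Tm := fun n =>
  if n = k then u else if k < n then .var (n-1) else .var n

lemma up_sub1 (k : ℕ) (u : Tm) : ∀ n, up (sub1 k u) n = sub1 (k+1) (lift 0 u) n := by
  intro n; cases n with
  | zero => simp [sub1]
  | succ n =>
      simp only [up_succ, sub1]
      rcases Nat.lt_trichotomy n k with h | h | h
      · rw [if_neg (by omega), if_neg (by omega), if_neg (by omega), if_neg (by omega)]
        simp [lift]
      · subst h; simp
      · rw [if_neg (by omega), if_pos h, if_neg (by omega), if_pos (by omega)]
        simp [lift]; omega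

lemma subst_eq_msubst (k : ℕ) (u : Tm) (t : Tm) : subst k u t = msubst (sub1 k u) t := by
  induction t generalizing k u with
  | type => rfl
  | kind => rfl
  | var n => simp [subst, msubst, sub1]
  | app t t' iht iht' => simp [subst, msubst, iht, iht']
  | lam A b ihA ihb =>
      simp [subst, msubst, ihA, ihb]
      exact msubst_ext b fun n => (up_sub1 k u n).symm
  | pi A B ihA ihB =>
      simp [subst, msubst, ihA, ihB]
      exact msubst_ext B fun n => (up_sub1 k u n).symm

/-- C1 -/
lemma ren_ren (f g : ℕ → ℕ) (t : Tm) : ren f (ren g t) = ren (fun n => f (g n)) t := by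
  induction t generalizing f g with
  | type => rfl
  | kind => rfl
  | var n => rfl
  | app t u iht ihu => simp [ren, iht, ihu]
  | lam A b ihA ihb =>
      simp [ren, ihA, ihb]
      exact ren_ext b fun n => by cases n <;> simp
  | pi A B ihA ihB =>
      simp [ren, ihA, ihB]
      exact ren_ext B fun n => by cases n <;> simp

/-- C2 -/
lemma msubst_ren (σ : ℕ → Tm) (f : ℕ → ℕ) (t : Tm) :
    msubst σ (ren f t) = msubst (fun n => σ (f n)) t := by
  induction t generalizing σ f with
  | type => rfl
  | kind => rfl
  | var n => rfl
  | app t u iht ihu => simp [ren, msubst, iht, ihu]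
  | lam A b ihA ihb =>
      simp [ren, msubst, ihA, ihb]
      exact msubst_ext b fun n => by cases n <;> simp
  | pi A B ihA ihB =>
      simp [ren, msubst, ihA, ihB]
      exact msubst_ext B fun n => by cases n <;> simp

lemma lift_zero_eq (t : Tm) : lift 0 t = ren Nat.succ t := by
  rw [lift_eq_ren]; exact ren_ext t fun n => by simp [liftF]

/-- C3 -/
lemma ren_msubst (f : ℕ → ℕ) (σ : ℕ → Tm) (t : Tm) :
    ren f (msubst σ t) = msubst (fun n => ren f (σ n)) t := by
  induction t generalizing σ f with
  | type => rfl
  | kind => rfl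
  | var n => rfl
  | app t u iht ihu => simp [ren, msubst, iht, ihu]
  | lam A b ihA ihb =>
      simp [ren, msubst, ihA, ihb]
      refine msubst_ext b fun n => ?_
      cases n with
      | zero => simp [ren]
      | succ n =>
          simp only [up_succ, lift_zero_eq, ren_ren]
          exact ren_ext (σ n) fun m => rfl
  | pi A B ihA ihB =>
      simp [ren, msubst, ihA, ihB]
      refine msubst_ext B fun n => ?_
      cases n with
      | zero => simp [ren]
      | succ n =>
          simp only [up_succ, lift_zero_eq, ren_ren]
          exact ren_ext (σ n) fun m => rfl

/-- C4 -/
lemma msubst_msubst (σ τ : ℕ → Tm) (t : Tm) :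
    msubst σ (msubst τ t) = msubst (fun n => msubst σ (τ n)) t := by
  induction t generalizing σ τ with
  | type => rfl
  | kind => rfl
  | var n => rfl
  | app t u iht ihu => simp [msubst, iht, ihu]
  | lam A b ihA ihb =>
      simp [msubst, ihA, ihb]
      refine msubst_ext b fun n => ?_
      cases n with
      | zero => rfl
      | succ n => simp only [up_succ, lift_zero_eq, ren_msubst, msubst_ren]
  | pi A B ihA ihB =>
      simp [msubst, ihA, ihB]
      refine msubst_ext B fun n => ?_
      cases n with
      | zero => rfl
      | succ n => simp only [up_succ, lift_zero_eq, ren_msubst, msubst_ren]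

lemma msubst_id (t : Tm) : msubst (fun n => .var n) t = t := by
  induction t with
  | type => rfl
  | kind => rfl
  | var n => rfl
  | app t u iht ihu => simp [msubst, iht, ihu]
  | lam A b ihA ihb =>
      simp only [msubst]
      rw [msubst_ext b (τ := fun n => .var n) (fun n => by cases n <;> simp [lift]), ihb, ihA]
  | pi A B ihA ihB =>
      simp only [msubst]
      rw [msubst_ext B (τ := fun n => .var n) (fun n => by cases n <;> simp [lift]), ihB, ihA]
/-! ### B. Parallel reduction and confluence -/

lemma ren_as_msubst (f : ℕ → ℕ) (t : Tm) : ren f t = msubst (fun n => .var (f n)) t := by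
  induction t generalizing f with
  | type => rfl
  | kind => rfl
  | var n => rfl
  | app t u iht ihu => simp [ren, msubst, iht, ihu]
  | lam A b ihA ihb =>
      simp only [ren, msubst, ihA, ihb]
      rw [msubst_ext b (τ := up fun n => .var (f n)) (fun n => by cases n <;> simp [lift])]
  | pi A B ihA ihB =>
      simp only [ren, msubst, ihA, ihB]
      rw [msubst_ext B (τ := up fun n => .var (f n)) (fun n => by cases n <;> simp [lift])]

/-- E2 -/
lemma msubst_subst0 (σ : ℕ → Tm) (u b : Tm) :
    msubst σ (subst 0 u b) = subst 0 (msubst σ u) (msubst (up σ) b) := by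
  rw [subst_eq_msubst, subst_eq_msubst, msubst_msubst, msubst_msubst]
  refine msubst_ext b fun n => ?_
  cases n with
  | zero => simp [sub1, msubst]
  | succ n =>
      simp only [sub1, up_succ, lift_zero_eq, msubst_ren]
      rw [if_neg (by omega), if_pos (by omega)]
      simp only [msubst]
      have : (fun m => sub1 0 (msubst σ u) (Nat.succ m)) = fun m => Tm.var m := by
        funext m; simp [sub1]
      rw [msubst_ext (σ n) (τ := fun m => Tm.var m) (fun m => by simp [sub1]), msubst_id]
      simp

/-- E1 -/
lemma ren_subst0 (f : ℕ → ℕ) (u b : Tm) :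
    ren f (subst 0 u b) = subst 0 (ren f u) (ren (upr f) b) := by
  rw [ren_as_msubst, msubst_subst0, ren_as_msubst, ren_as_msubst (upr f)]
  congr 1
  exact msubst_ext b fun n => by cases n <;> simp [lift]

/-- Parallel reduction. -/
inductive Par : Tm → Tm → Prop
  | type : Par .type .type
  | kind : Par .kind .kind
  | var (n) : Par (.var n) (.var n)
  | app {t t' u u'} : Par t t' → Par u u' → Par (.app t u) (.app t' u')
  | lam {A A' b b'} : Par A A' → Par b b' → Par (.lam A b) (.lam A' b')
  | pi {A A' B B'} : Par A A' → Par B B' → Par (.pi A B) (.pi A' B')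
  | beta {A A' b b' u u'} : Par A A' → Par b b' → Par u u' →
      Par (.app (.lam A b) u) (subst 0 u' b')

lemma Par.refl (t : Tm) : Par t t := by
  induction t with
  | type => exact .type
  | kind => exact .kind
  | var n => exact .var n
  | app t u iht ihu => exact .app iht ihu
  | lam A b ihA ihb => exact .lam ihA ihb
  | pi A B ihA ihB => exact .pi ihA ihB

lemma Step.par {t u : Tm} (h : Step t u) : Par t u := by
  induction h with
  | beta A b u => exact .beta (Par.refl A) (Par.refl b) (Par.refl u)
  | appL u _ ih => exact .app ih (Par.refl u)
  | appR t _ ih => exact .app (Par.refl t) ih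
  | lamA b _ ih => exact .lam ih (Par.refl b)
  | lamB A _ ih => exact .lam (Par.refl A) ih
  | piA B _ ih => exact .pi ih (Par.refl B)
  | piB A _ ih => exact .pi (Par.refl A) ih

lemma Red.app {t t' u u' : Tm} (ht : Red t t') (hu : Red u u') :
    Red (.app t u) (.app t' u') := by
  refine Relation.ReflTransGen.trans (b := Tm.app t' u) ?_ ?_
  · exact Relation.ReflTransGen.lift (fun x => Tm.app x u) (fun a b h => Step.appL u h) _ _ ht
  · exact Relation.ReflTransGen.lift (fun x => Tm.app t' x) (fun a b h => Step.appR t' h) _ _ hu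

lemma Red.lam {t t' u u' : Tm} (ht : Red t t') (hu : Red u u') :
    Red (.lam t u) (.lam t' u') := by
  refine Relation.ReflTransGen.trans (b := Tm.lam t' u) ?_ ?_
  · exact Relation.ReflTransGen.lift (fun x => Tm.lam x u) (fun a b h => Step.lamA u h) _ _ ht
  · exact Relation.ReflTransGen.lift (fun x => Tm.lam t' x) (fun a b h => Step.lamB t' h) _ _ hu

lemma Red.pi {t t' u u' : Tm} (ht : Red t t') (hu : Red u u') :
    Red (.pi t u) (.pi t' u') := by
  refine Relation.ReflTransGen.trans (b := Tm.pi t' u) ?_ ?_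
  · exact Relation.ReflTransGen.lift (fun x => Tm.pi x u) (fun a b h => Step.piA u h) _ _ ht
  · exact Relation.ReflTransGen.lift (fun x => Tm.pi t' x) (fun a b h => Step.piB t' h) _ _ hu

lemma Par.red {t u : Tm} (h : Par t u) : Red t u := by
  induction h with
  | type => exact .refl
  | kind => exact .refl
  | var n => exact .refl
  | app _ _ iht ihu => exact Red.app iht ihu
  | lam _ _ ihA ihb => exact Red.lam ihA ihb
  | pi _ _ ihA ihB => exact Red.pi ihA ihB
  | @beta A A' b b' u u' _ _ _ ihA ihb ihu =>
      refine Relation.ReflTransGen.trans (b := Tm.app (Tm.lam A' b') u') ?_ ?_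
      · exact Red.app (Red.lam ihA ihb) ihu
      · exact Relation.ReflTransGen.single (Step.beta A' b' u')

lemma Par.ren {t t' : Tm} (f : ℕ → ℕ) (h : Par t t') : Par (ren f t) (ren f t') := by
  induction h generalizing f with
  | type => exact .type
  | kind => exact .kind
  | var n => exact .var _
  | app _ _ iht ihu => exact .app (iht f) (ihu f)
  | lam _ _ ihA ihb => exact .lam (ihA f) (ihb (upr f))
  | pi _ _ ihA ihB => exact .pi (ihA f) (ihB (upr f))
  | beta _ _ _ ihA ihb ihu =>
      rw [ren_subst0]
      exact .beta (ihA f) (ihb (upr f)) (ihu f)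

lemma Par.msubst {t t' : Tm} {σ σ' : ℕ → Tm} (h : Par t t')
    (hσ : ∀ n, Par (σ n) (σ' n)) : Par (msubst σ t) (msubst σ' t') := by
  induction h generalizing σ σ' with
  | type => exact .type
  | kind => exact .kind
  | var n => exact hσ n
  | app _ _ iht ihu => exact .app (iht hσ) (ihu hσ)
  | lam _ _ ihA ihb =>
      refine .lam (ihA hσ) (ihb fun n => ?_)
      cases n with
      | zero => exact .var 0
      | succ n => simp only [up_succ, lift_zero_eq]; exact (hσ n).ren Nat.succ
  | pi _ _ ihA ihB =>
      refine .pi (ihA hσ) (ihB fun n => ?_)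
      cases n with
      | zero => exact .var 0
      | succ n => simp only [up_succ, lift_zero_eq]; exact (hσ n).ren Nat.succ
  | beta _ _ _ ihA ihb ihu =>
      rw [msubst_subst0]
      refine .beta (ihA hσ) (ihb fun n => ?_) (ihu hσ)
      cases n with
      | zero => exact .var 0
      | succ n => simp only [up_succ, lift_zero_eq]; exact (hσ n).ren Nat.succ

lemma Par.subst0 {b b' u u' : Tm} (hb : Par b b') (hu : Par u u') :
    Par (subst 0 u b) (subst 0 u' b') := by
  rw [subst_eq_msubst, subst_eq_msubst]
  refine hb.msubst fun n => ?_
  cases n with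
  | zero => simpa [sub1] using hu
  | succ n => simp [sub1]; exact .var n

/-- Complete development. -/
def cd : Tm → Tm
  | .type => .type
  | .kind => .kind
  | .var n => .var n
  | .app (.lam _ b) u => subst 0 (cd u) (cd b)
  | .app t u => .app (cd t) (cd u)
  | .lam A b => .lam (cd A) (cd b)
  | .pi A B => .pi (cd A) (cd B)

lemma Par.lam_inv {A b x : Tm} (h : Par (.lam A b) x) :
    ∃ A' b', x = .lam A' b' ∧ Par A A' ∧ Par b b' := by
  cases h with
  | lam hA hb => exact ⟨_, _, rfl, hA, hb⟩

lemma Par.triangle {t u : Tm} (h : Par t u) : Par u (cd t) := by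
  induction h with
  | type => exact .type
  | kind => exact .kind
  | var n => exact .var n
  | @app t t' u u' ht hu iht ihu =>
      match t, ht, iht with
      | .lam A b, ht, iht =>
          obtain ⟨A', b', rfl, hA, hb⟩ := ht.lam_inv
          obtain ⟨A'', b'', heq, hA', hb'⟩ := iht.lam_inv
          have : cd (Tm.lam A b) = Tm.lam (cd A) (cd b) := rfl
          rw [this] at heq iht
          cases heq
          exact Par.beta hA' hb' ihu
      | .type, ht, iht => exact .app iht ihu
      | .kind, ht, iht => exact .app iht ihu
      | .var n, ht, iht => exact .app iht ihu
      | .app t1 t2, ht, iht => exact .app iht ihu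
      | .pi A B, ht, iht => exact .app iht ihu
  | lam _ _ ihA ihb => exact .lam ihA ihb
  | pi _ _ ihA ihB => exact .pi ihA ihB
  | @beta A A' b b' u u' _ _ _ ihA ihb ihu => exact Par.subst0 ihb ihu
/-! ### B2. Confluence, Church–Rosser, normal forms -/

lemma red_eq_rtg_par : Red = Relation.ReflTransGen Par := by
  funext t u
  apply propext
  constructor
  · exact fun h => Relation.ReflTransGen.mono (fun a b => Step.par) _ _ h
  · intro h
    induction h with
    | refl => exact .refl
    | tail _ h ih => exact ih.trans h.red

theorem red_confluent {t u v : Tm} (hu : Red t u) (hv : Red t v) :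
    ∃ w, Red u w ∧ Red v w := by
  rw [red_eq_rtg_par] at hu hv ⊢
  have h := Relation.church_rosser
    (r := Par) (fun a b c hab hac =>
      ⟨cd a, Relation.ReflGen.single hab.triangle, Relation.ReflTransGen.single hac.triangle⟩)
    hu hv
  exact h

lemma red_normal_eq {t v : Tm} (h : Red t v) (ht : Normal t) : v = t := by
  induction h with
  | refl => rfl
  | tail _ h ih => subst ih; exact absurd h (ht _)

lemma conv_of_red {t u : Tm} (h : Red t u) : Conv t u := by
  induction h with
  | refl => exact Relation.EqvGen.refl t
  | tail _ h ih => exact Relation.EqvGen.trans _ _ _ ih (Relation.EqvGen.rel _ _ h)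

theorem conv_join {t u : Tm} (h : Conv t u) : ∃ w, Red t w ∧ Red u w := by
  induction h with
  | rel a b h => exact ⟨b, Relation.ReflTransGen.single h, Relation.ReflTransGen.refl⟩
  | refl a => exact ⟨a, .refl, .refl⟩
  | symm a b _ ih => exact ⟨ih.choose, ih.choose_spec.2, ih.choose_spec.1⟩
  | trans a b c _ _ ih1 ih2 =>
      obtain ⟨w1, haw1, hbw1⟩ := ih1
      obtain ⟨w2, hbw2, hcw2⟩ := ih2
      obtain ⟨w, hw1, hw2⟩ := red_confluent hbw1 hbw2
      exact ⟨w, haw1.trans hw1, hcw2.trans hw2⟩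
/-! ### C. The stratified skeleton type system -/

inductive SK : Type
  | iota | arr (σ τ : SK)
deriving DecidableEq

inductive KK : Type
  | star | karr (σ : SK) (κ : KK)
deriving DecidableEq

inductive Cl : Type
  | o (σ : SK) | f (κ : KK) | kd
deriving DecidableEq

/-- Simple-type skeleton of a type. -/
def nu : Tm → SK
  | .pi A B => .arr (nu A) (nu B)
  | .lam _ b => nu b
  | .app t _ => nu t
  | _ => .iota

/-- Kind skeleton of a kind. -/
def kap : Tm → KK
  | .pi A B => .karr (nu A) (kap B)
  | .lam _ b => kap b
  | .app t _ => kap t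
  | _ => .star

/-- Syntactic kinds: Π-chains ending in Type. -/
def isKindB : Tm → Bool
  | .type => true
  | .pi _ B => isKindB B
  | _ => false

inductive SS : List Cl → Tm → Cl → Prop
  | type {Γ} : SS Γ .type .kd
  | var {Γ n c} : Γ[n]? = some c → SS Γ (.var n) c
  | appO {Γ t u σ τ} : SS Γ t (.o (.arr σ τ)) → SS Γ u (.o σ) → SS Γ (.app t u) (.o τ)
  | appF {Γ t u σ κ} : SS Γ t (.f (.karr σ κ)) → SS Γ u (.o σ) → SS Γ (.app t u) (.f κ)
  | lamO {Γ A b τ} : SS Γ A (.f .star) → SS (.o (nu A) :: Γ) b (.o τ) →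
      SS Γ (.lam A b) (.o (.arr (nu A) τ))
  | lamF {Γ A b κ} : SS Γ A (.f .star) → SS (.o (nu A) :: Γ) b (.f κ) →
      SS Γ (.lam A b) (.f (.karr (nu A) κ))
  | piF {Γ A B} : SS Γ A (.f .star) → SS (.o (nu A) :: Γ) B (.f .star) →
      SS Γ (.pi A B) (.f .star)
  | piK {Γ A B} : SS Γ A (.f .star) → SS (.o (nu A) :: Γ) B .kd → SS Γ (.pi A B) .kd

lemma nu_ren (f : ℕ → ℕ) (t : Tm) : nu (ren f t) = nu t := by
  induction t generalizing f with
  | type => rfl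
  | kind => rfl
  | var n => rfl
  | app t u iht ihu => simp [ren, nu, iht]
  | lam A b ihA ihb => simp [ren, nu, ihb]
  | pi A B ihA ihB => simp [ren, nu, ihA, ihB]

lemma kap_ren (f : ℕ → ℕ) (t : Tm) : kap (ren f t) = kap t := by
  induction t generalizing f with
  | type => rfl
  | kind => rfl
  | var n => rfl
  | app t u iht ihu => simp [ren, kap, iht]
  | lam A b ihA ihb => simp [ren, kap, ihb]
  | pi A B ihA ihB => simp [ren, kap, nu_ren, ihB]

lemma isKindB_ren (f : ℕ → ℕ) (t : Tm) : isKindB (ren f t) = isKindB t := by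
  induction t generalizing f with
  | type => rfl
  | kind => rfl
  | var n => rfl
  | app t u iht ihu => simp [ren, isKindB]
  | lam A b ihA ihb => simp [ren, isKindB]
  | pi A B ihA ihB => simp [ren, isKindB, ihB]

lemma nu_lift (d : ℕ) (t : Tm) : nu (lift d t) = nu t := by rw [lift_eq_ren, nu_ren]
lemma kap_lift (d : ℕ) (t : Tm) : kap (lift d t) = kap t := by rw [lift_eq_ren, kap_ren]
lemma isKindB_lift (d : ℕ) (t : Tm) : isKindB (lift d t) = isKindB t := by
  rw [lift_eq_ren, isKindB_ren]

/-- Weakening for SS. -/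
lemma SS.weaken {Γ : List Cl} {t : Tm} {c : Cl} (h : SS Γ t c) :
    ∀ (Δ Γ₀ : List Cl) (c₀ : Cl), Γ = Δ ++ Γ₀ →
      SS (Δ ++ c₀ :: Γ₀) (lift Δ.length t) c := by
  induction h with
  | type => intro Δ Γ₀ c₀ hΓ; exact .type
  | @var Γ n c hget =>
      intro Δ Γ₀ c₀ hΓ; subst hΓ
      by_cases hn : n < Δ.length
      · rw [show lift Δ.length (.var n) = .var n by simp [lift, hn]]
        refine .var ?_
        rw [List.getElem?_append_left hn] at hget
        rw [List.getElem?_append_left hn]; exact hget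
      · rw [show lift Δ.length (.var n) = .var (n+1) by simp [lift, hn]]
        refine .var ?_
        rw [List.getElem?_append_right (by omega)] at hget
        rw [List.getElem?_append_right (by omega)]
        rw [show n + 1 - Δ.length = (n - Δ.length) + 1 by omega]
        simpa using hget
  | appO _ _ iht ihu =>
      intro Δ Γ₀ c₀ hΓ
      exact .appO (iht Δ Γ₀ c₀ hΓ) (ihu Δ Γ₀ c₀ hΓ)
  | appF _ _ iht ihu =>
      intro Δ Γ₀ c₀ hΓ
      exact .appF (iht Δ Γ₀ c₀ hΓ) (ihu Δ Γ₀ c₀ hΓ)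
  | @lamO Γ A b τ _ _ ihA ihb =>
      intro Δ Γ₀ c₀ hΓ; subst hΓ
      have hb := ihb (.o (nu A) :: Δ) Γ₀ c₀ rfl
      have : nu (lift Δ.length A) = nu A := nu_lift _ _
      refine (show SS _ (Tm.lam (lift Δ.length A) (lift (Δ.length+1) b)) _ from ?_)
      rw [← this] at hb ⊢
      exact .lamO (ihA Δ Γ₀ c₀ rfl) (by simpa using hb)
  | @lamF Γ A b κ _ _ ihA ihb =>
      intro Δ Γ₀ c₀ hΓ; subst hΓ
      have hb := ihb (.o (nu A) :: Δ) Γ₀ c₀ rfl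
      have : nu (lift Δ.length A) = nu A := nu_lift _ _
      rw [show lift Δ.length (Tm.lam A b) = Tm.lam (lift Δ.length A) (lift (Δ.length+1) b) from rfl]
      rw [← this]
      exact .lamF (ihA Δ Γ₀ c₀ rfl) (by simpa [this] using hb)
  | @piF Γ A B _ _ ihA ihB =>
      intro Δ Γ₀ c₀ hΓ; subst hΓ
      have hB := ihB (.o (nu A) :: Δ) Γ₀ c₀ rfl
      have : nu (lift Δ.length A) = nu A := nu_lift _ _
      rw [show lift Δ.length (Tm.pi A B) = Tm.pi (lift Δ.length A) (lift (Δ.length+1) B) from rfl]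
      exact .piF (ihA Δ Γ₀ c₀ rfl) (by simpa [this] using hB)
  | @piK Γ A B _ _ ihA ihB =>
      intro Δ Γ₀ c₀ hΓ; subst hΓ
      have hB := ihB (.o (nu A) :: Δ) Γ₀ c₀ rfl
      have : nu (lift Δ.length A) = nu A := nu_lift _ _
      rw [show lift Δ.length (Tm.pi A B) = Tm.pi (lift Δ.length A) (lift (Δ.length+1) B) from rfl]
      exact .piK (ihA Δ Γ₀ c₀ rfl) (by simpa [this] using hB)

lemma SS.weaken0 {Γ : List Cl} {t : Tm} {c c₀ : Cl} (h : SS Γ t c) :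
    SS (c₀ :: Γ) (lift 0 t) c := h.weaken [] Γ c₀ rfl
/-! ### C2. SS meta-theory -/

def cOK : Cl → Prop
  | .o _ => False
  | _ => True

lemma isKindB_class {t : Tm} (hk : isKindB t = true) {Γ : List Cl} {c : Cl}
    (h : SS Γ t c) : c = .kd := by
  induction t generalizing Γ c with
  | type => cases h; rfl
  | kind => simp [isKindB] at hk
  | var n => simp [isKindB] at hk
  | app t u iht ihu => simp [isKindB] at hk
  | lam A b ihA ihb => simp [isKindB] at hk
  | pi A B ihA ihB =>
      simp only [isKindB] at hk
      cases h with
      | piF hA hB => exact absurd (ihB hk hB) (by simp)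
      | piK hA hB => rfl

lemma nu_subst_inv {Γ' : List Cl} {b : Tm} {c : Cl} (h : SS Γ' b c) :
    ∀ (Δ Γ₀ : List Cl) (σ₀ : SK) (u : Tm), Γ' = Δ ++ (.o σ₀) :: Γ₀ → cOK c →
      nu (subst Δ.length u b) = nu b ∧ kap (subst Δ.length u b) = kap b ∧
      isKindB (subst Δ.length u b) = isKindB b := by
  induction h with
  | type => intro Δ Γ₀ σ₀ u hΓ hc; exact ⟨rfl, rfl, rfl⟩
  | @var Γ n c hget =>
      intro Δ Γ₀ σ₀ u hΓ hc; subst hΓ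
      have hne : n ≠ Δ.length := by
        intro he; subst he
        rw [List.getElem?_append_right (le_refl _)] at hget
        simp at hget
        subst hget
        simp [cOK] at hc
      simp only [subst, if_neg hne]
      split <;> exact ⟨rfl, rfl, rfl⟩
  | appO _ _ iht ihu => intro Δ Γ₀ σ₀ u hΓ hc; simp [cOK] at hc
  | appF ht hu iht ihu =>
      intro Δ Γ₀ σ₀ u hΓ hc
      obtain ⟨h1, h2, h3⟩ := iht Δ Γ₀ σ₀ u hΓ trivial
      exact ⟨by simp [subst, nu, h1], by simp [subst, kap, h2], by simp [subst, isKindB]⟩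
  | lamO _ _ ihA ihb => intro Δ Γ₀ σ₀ u hΓ hc; simp [cOK] at hc
  | @lamF Γ A b κ hA hb ihA ihb =>
      intro Δ Γ₀ σ₀ u hΓ hc; subst hΓ
      obtain ⟨h1, h2, h3⟩ := ihb (.o (nu A) :: Δ) Γ₀ σ₀ (lift 0 u) rfl trivial
      exact ⟨by simpa [subst, nu] using h1, by simpa [subst, kap] using h2,
        by simp [subst, isKindB]⟩
  | @piF Γ A B hA hB ihA ihB =>
      intro Δ Γ₀ σ₀ u hΓ hc; subst hΓ
      obtain ⟨a1, a2, a3⟩ := ihA Δ Γ₀ σ₀ u rfl trivial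
      obtain ⟨b1, b2, b3⟩ := ihB (.o (nu A) :: Δ) Γ₀ σ₀ (lift 0 u) rfl trivial
      refine ⟨by simp [subst, nu, a1]; simpa using b1, ?_, by simpa [subst, isKindB] using b3⟩
      simp only [subst, kap]
      rw [show ((Cl.o (nu A) :: Δ).length) = Δ.length + 1 from rfl] at b2
      rw [a1, b2]
  | @piK Γ A B hA hB ihA ihB =>
      intro Δ Γ₀ σ₀ u hΓ hc; subst hΓ
      obtain ⟨a1, a2, a3⟩ := ihA Δ Γ₀ σ₀ u rfl trivial
      obtain ⟨b1, b2, b3⟩ := ihB (.o (nu A) :: Δ) Γ₀ σ₀ (lift 0 u) rfl trivial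
      refine ⟨by simp [subst, nu, a1]; simpa using b1, ?_, by simpa [subst, isKindB] using b3⟩
      simp only [subst, kap]
      rw [show ((Cl.o (nu A) :: Δ).length) = Δ.length + 1 from rfl] at b2
      rw [a1, b2]

lemma SS.subst_lemma {Γ' : List Cl} {t : Tm} {c : Cl} (h : SS Γ' t c) :
    ∀ (Δ Γ₀ : List Cl) (σ₀ : SK) (u : Tm), Γ' = Δ ++ (.o σ₀) :: Γ₀ →
      SS (Δ ++ Γ₀) u (.o σ₀) → SS (Δ ++ Γ₀) (subst Δ.length u t) c := by
  induction h with
  | type => intro Δ Γ₀ σ₀ u hΓ hu; exact .type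
  | @var Γ n c hget =>
      intro Δ Γ₀ σ₀ u hΓ hu; subst hΓ
      rcases Nat.lt_trichotomy n Δ.length with hn | hn | hn
      · rw [show subst Δ.length u (.var n) = .var n by
          simp only [subst]; rw [if_neg (by omega), if_neg (by omega)]]
        refine .var ?_
        rw [List.getElem?_append_left hn] at hget
        rw [List.getElem?_append_left hn]; exact hget
      · rw [show subst Δ.length u (.var n) = u by simp only [subst]; rw [if_pos hn]]
        rw [List.getElem?_append_right (by omega), hn] at hget
        simp at hget
        rw [hget] at hu
        exact hu
      · rw [show subst Δ.length u (.var n) = .var (n-1) by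
          simp only [subst]; rw [if_neg (by omega), if_pos (by omega)]]
        refine .var ?_
        rw [List.getElem?_append_right (by omega)] at hget
        rw [List.getElem?_append_right (by omega)]
        rw [show n - 1 - Δ.length = (n - Δ.length) - 1 by omega]
        rcases Nat.exists_eq_add_of_lt hn with ⟨m, hm⟩
        rw [show n - Δ.length = m + 1 by omega] at hget ⊢
        simpa using hget
  | appO _ _ iht ihu =>
      intro Δ Γ₀ σ₀ u hΓ hu
      exact .appO (iht Δ Γ₀ σ₀ u hΓ hu) (ihu Δ Γ₀ σ₀ u hΓ hu)
  | appF _ _ iht ihu =>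
      intro Δ Γ₀ σ₀ u hΓ hu
      exact .appF (iht Δ Γ₀ σ₀ u hΓ hu) (ihu Δ Γ₀ σ₀ u hΓ hu)
  | @lamO Γ A b τ hA hb ihA ihb =>
      intro Δ Γ₀ σ₀ u hΓ hu; subst hΓ
      have hnu : nu (subst Δ.length u A) = nu A :=
        (nu_subst_inv hA Δ Γ₀ σ₀ u rfl trivial).1
      have hA' := ihA Δ Γ₀ σ₀ u rfl hu
      have hb' : SS (Cl.o (nu A) :: (Δ ++ Γ₀)) (subst (Δ.length+1) (lift 0 u) b) (.o τ) :=
        ihb (.o (nu A) :: Δ) Γ₀ σ₀ (lift 0 u) rfl hu.weaken0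
      show SS (Δ ++ Γ₀) (Tm.lam (subst Δ.length u A) (subst (Δ.length+1) (lift 0 u) b))
        (.o (.arr (nu A) τ))
      rw [← hnu] at hb' ⊢
      exact .lamO hA' hb'
  | @lamF Γ A b κ hA hb ihA ihb =>
      intro Δ Γ₀ σ₀ u hΓ hu; subst hΓ
      have hnu : nu (subst Δ.length u A) = nu A :=
        (nu_subst_inv hA Δ Γ₀ σ₀ u rfl trivial).1
      have hA' := ihA Δ Γ₀ σ₀ u rfl hu
      have hb' : SS (Cl.o (nu A) :: (Δ ++ Γ₀)) (subst (Δ.length+1) (lift 0 u) b) (.f κ) :=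
        ihb (.o (nu A) :: Δ) Γ₀ σ₀ (lift 0 u) rfl hu.weaken0
      show SS (Δ ++ Γ₀) (Tm.lam (subst Δ.length u A) (subst (Δ.length+1) (lift 0 u) b))
        (.f (.karr (nu A) κ))
      rw [← hnu] at hb' ⊢
      exact .lamF hA' hb'
  | @piF Γ A B hA hB ihA ihB =>
      intro Δ Γ₀ σ₀ u hΓ hu; subst hΓ
      have hnu : nu (subst Δ.length u A) = nu A :=
        (nu_subst_inv hA Δ Γ₀ σ₀ u rfl trivial).1
      have hA' := ihA Δ Γ₀ σ₀ u rfl hu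
      have hB' : SS (Cl.o (nu A) :: (Δ ++ Γ₀)) (subst (Δ.length+1) (lift 0 u) B) (.f .star) :=
        ihB (.o (nu A) :: Δ) Γ₀ σ₀ (lift 0 u) rfl hu.weaken0
      show SS (Δ ++ Γ₀) (Tm.pi (subst Δ.length u A) (subst (Δ.length+1) (lift 0 u) B)) (.f .star)
      rw [← hnu] at hB'
      exact .piF hA' hB'
  | @piK Γ A B hA hB ihA ihB =>
      intro Δ Γ₀ σ₀ u hΓ hu; subst hΓ
      have hnu : nu (subst Δ.length u A) = nu A :=
        (nu_subst_inv hA Δ Γ₀ σ₀ u rfl trivial).1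
      have hA' := ihA Δ Γ₀ σ₀ u rfl hu
      have hB' : SS (Cl.o (nu A) :: (Δ ++ Γ₀)) (subst (Δ.length+1) (lift 0 u) B) .kd :=
        ihB (.o (nu A) :: Δ) Γ₀ σ₀ (lift 0 u) rfl hu.weaken0
      show SS (Δ ++ Γ₀) (Tm.pi (subst Δ.length u A) (subst (Δ.length+1) (lift 0 u) B)) .kd
      rw [← hnu] at hB'
      exact .piK hA' hB'

lemma SS.subst0 {Γ : List Cl} {b u : Tm} {σ₀ : SK} {c : Cl}
    (hb : SS (.o σ₀ :: Γ) b c) (hu : SS Γ u (.o σ₀)) : SS Γ (subst 0 u b) c :=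
  hb.subst_lemma [] Γ σ₀ u rfl hu

lemma SS.uniq {Γ : List Cl} {t : Tm} {c c' : Cl} (h : SS Γ t c) (h' : SS Γ t c') :
    c = c' := by
  induction h generalizing c' with
  | type => cases h'; rfl
  | var hget => cases h' with | var hget' => rw [hget] at hget'; exact Option.some_inj.mp hget'
  | appO _ _ iht ihu =>
      cases h' with
      | appO ht' hu' => have := iht ht'; injection this with h1; injection h1 with _ h2; rw [h2]
      | appF ht' hu' => exact absurd (iht ht') (by simp)
  | appF _ _ iht ihu =>
      cases h' with
      | appO ht' hu' => exact absurd (iht ht') (by simp)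
      | appF ht' hu' => have := iht ht'; injection this with h1; injection h1 with _ h2; rw [h2]
  | lamO _ _ ihA ihb =>
      cases h' with
      | lamO hA' hb' => have := ihb hb'; injection this with h1; rw [h1]
      | lamF hA' hb' => exact absurd (ihb hb') (by simp)
  | lamF _ _ ihA ihb =>
      cases h' with
      | lamO hA' hb' => exact absurd (ihb hb') (by simp)
      | lamF hA' hb' => have := ihb hb'; injection this with h1; rw [h1]
  | piF _ _ ihA ihB =>
      cases h' with
      | piF hA' hB' => rfl
      | piK hA' hB' => exact absurd (ihB hB') (by simp)
  | piK _ _ ihA ihB =>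
      cases h' with
      | piF hA' hB' => exact absurd (ihB hB') (by simp)
      | piK hA' hB' => rfl

lemma nu_step {t t' : Tm} (hs : Step t t') :
    ∀ {Γ : List Cl} {c : Cl}, SS Γ t c → cOK c →
      nu t' = nu t ∧ kap t' = kap t ∧ isKindB t' = isKindB t := by
  induction hs with
  | beta A b u =>
      intro Γ c h hc
      cases h with
      | appO ht hu => simp [cOK] at hc
      | appF ht hu =>
          cases ht with
          | lamF hA hb =>
              obtain ⟨h1, h2, h3⟩ := nu_subst_inv hb [] Γ (nu A) u rfl trivial
              have hkb : isKindB b = false := by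
                cases hkk : isKindB b
                · rfl
                · exact absurd (isKindB_class hkk hb) (by simp)
              simp only [List.length_nil] at h1 h2 h3
              exact ⟨by simp [nu, h1], by simp [kap, h2], by simp [isKindB, h3, hkb]⟩
  | appL u hs ih =>
      intro Γ c h hc
      cases h with
      | appO ht hu => simp [cOK] at hc
      | appF ht hu =>
          obtain ⟨h1, h2, h3⟩ := ih ht trivial
          exact ⟨by simp [nu, h1], by simp [kap, h2], by simp [isKindB]⟩
  | appR t hs ih =>
      intro Γ c h hc
      exact ⟨rfl, rfl, rfl⟩
  | lamA b hs ih =>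
      intro Γ c h hc
      exact ⟨rfl, rfl, rfl⟩
  | lamB A hs ih =>
      intro Γ c h hc
      cases h with
      | lamO hA hb => simp [cOK] at hc
      | lamF hA hb =>
          obtain ⟨h1, h2, h3⟩ := ih hb trivial
          exact ⟨by simp [nu, h1], by simp [kap, h2], by simp [isKindB]⟩
  | piA B hs ih =>
      intro Γ c h hc
      cases h with
      | piF hA hB =>
          obtain ⟨h1, h2, h3⟩ := ih hA trivial
          exact ⟨by simp [nu, h1], by simp [kap, h1], by simp [isKindB]⟩
      | piK hA hB =>
          obtain ⟨h1, h2, h3⟩ := ih hA trivial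
          exact ⟨by simp [nu, h1], by simp [kap, h1], by simp [isKindB]⟩
  | piB A hs ih =>
      intro Γ c h hc
      cases h with
      | piF hA hB =>
          obtain ⟨h1, h2, h3⟩ := ih hB trivial
          exact ⟨by simp [nu, h1], by simp [kap, h2], by simp [isKindB, h3]⟩
      | piK hA hB =>
          obtain ⟨h1, h2, h3⟩ := ih hB trivial
          exact ⟨by simp [nu, h1], by simp [kap, h2], by simp [isKindB, h3]⟩

lemma SS.sr {t t' : Tm} (hs : Step t t') : ∀ {Γ : List Cl} {c : Cl}, SS Γ t c → SS Γ t' c := by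
  induction hs with
  | beta A b u =>
      intro Γ c h
      cases h with
      | appO ht hu =>
          cases ht with
          | lamO hA hb => exact hb.subst0 hu
      | appF ht hu =>
          cases ht with
          | lamF hA hb => exact hb.subst0 hu
  | appL u hs ih =>
      intro Γ c h
      cases h with
      | appO ht hu => exact .appO (ih ht) hu
      | appF ht hu => exact .appF (ih ht) hu
  | appR t hs ih =>
      intro Γ c h
      cases h with
      | appO ht hu => exact .appO ht (ih hu)
      | appF ht hu => exact .appF ht (ih hu)
  | @lamA A A' b hs ih =>
      intro Γ c h
      have hnu : nu A' = nu A := by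
        cases h with
        | lamO hA hb => exact (nu_step hs hA trivial).1
        | lamF hA hb => exact (nu_step hs hA trivial).1
      cases h with
      | lamO hA hb => rw [← hnu] at hb ⊢; exact .lamO (ih hA) hb
      | lamF hA hb => rw [← hnu] at hb ⊢; exact .lamF (ih hA) hb
  | lamB A hs ih =>
      intro Γ c h
      cases h with
      | lamO hA hb => exact .lamO hA (ih hb)
      | lamF hA hb => exact .lamF hA (ih hb)
  | @piA A A' B hs ih =>
      intro Γ c h
      have hnu : nu A' = nu A := by
        cases h with
        | piF hA hB => exact (nu_step hs hA trivial).1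
        | piK hA hB => exact (nu_step hs hA trivial).1
      cases h with
      | piF hA hB => rw [← hnu] at hB; exact .piF (ih hA) hB
      | piK hA hB => rw [← hnu] at hB; exact .piK (ih hA) hB
  | piB A hs ih =>
      intro Γ c h
      cases h with
      | piF hA hB => exact .piF hA (ih hB)
      | piK hA hB => exact .piK hA (ih hB)

lemma SS.red {t t' : Tm} (h : Red t t') {Γ : List Cl} {c : Cl} (ht : SS Γ t c) :
    SS Γ t' c := by
  induction h with
  | refl => exact ht
  | tail _ hs ih => exact SS.sr hs ih

lemma nu_red {t t' : Tm} (h : Red t t') {Γ : List Cl} {c : Cl} (ht : SS Γ t c)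
    (hc : cOK c) : nu t' = nu t ∧ kap t' = kap t ∧ isKindB t' = isKindB t := by
  induction h with
  | refl => exact ⟨rfl, rfl, rfl⟩
  | tail hr hs ih =>
      obtain ⟨h1, h2, h3⟩ := ih
      obtain ⟨g1, g2, g3⟩ := nu_step hs (SS.red hr ht) hc
      exact ⟨g1.trans h1, g2.trans h2, g3.trans h3⟩
/-! ### D. noKind -/

def noKind : Tm → Bool
  | .kind => false
  | .app t u => noKind t && noKind u
  | .lam A b => noKind A && noKind b
  | .pi A B => noKind A && noKind B
  | _ => true

lemma noKind_ren (f : ℕ → ℕ) (t : Tm) : noKind (ren f t) = noKind t := by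
  induction t generalizing f with
  | type => rfl
  | kind => rfl
  | var n => rfl
  | app t u iht ihu => simp [ren, noKind, iht, ihu]
  | lam A b ihA ihb => simp [ren, noKind, ihA, ihb]
  | pi A B ihA ihB => simp [ren, noKind, ihA, ihB]

lemma noKind_msubst {σ : ℕ → Tm} (t : Tm) (ht : noKind t = true)
    (hσ : ∀ n, noKind (σ n) = true) : noKind (msubst σ t) = true := by
  induction t generalizing σ with
  | type => rfl
  | kind => simp [noKind] at ht
  | var n => exact hσ n
  | app t u iht ihu =>
      simp [noKind] at ht
      simp [msubst, noKind, iht ht.1 hσ, ihu ht.2 hσ]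
  | lam A b ihA ihb =>
      simp [noKind] at ht
      have hup : ∀ n, noKind (up σ n) = true := fun n => by
        cases n with
        | zero => rfl
        | succ n => simp [lift_zero_eq, noKind_ren, hσ n]
      simp [msubst, noKind, ihA ht.1 hσ, ihb ht.2 hup]
  | pi A B ihA ihB =>
      simp [noKind] at ht
      have hup : ∀ n, noKind (up σ n) = true := fun n => by
        cases n with
        | zero => rfl
        | succ n => simp [lift_zero_eq, noKind_ren, hσ n]
      simp [msubst, noKind, ihA ht.1 hσ, ihB ht.2 hup]

lemma noKind_subst0 {u b : Tm} (hb : noKind b = true) (hu : noKind u = true) :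
    noKind (subst 0 u b) = true := by
  rw [subst_eq_msubst]
  refine noKind_msubst b hb fun n => ?_
  cases n with
  | zero => simpa [sub1] using hu
  | succ n => simp [sub1]; rfl

lemma noKind_step {t t' : Tm} (h : Step t t') (ht : noKind t = true) : noKind t' = true := by
  induction h with
  | beta A b u =>
      simp [noKind] at ht
      exact noKind_subst0 ht.1.2 ht.2
  | appL u _ ih => simp [noKind] at ht ⊢; exact ⟨ih ht.1, ht.2⟩
  | appR t _ ih => simp [noKind] at ht ⊢; exact ⟨ht.1, ih ht.2⟩
  | lamA b _ ih => simp [noKind] at ht ⊢; exact ⟨ih ht.1, ht.2⟩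
  | lamB A _ ih => simp [noKind] at ht ⊢; exact ⟨ht.1, ih ht.2⟩
  | piA B _ ih => simp [noKind] at ht ⊢; exact ⟨ih ht.1, ht.2⟩
  | piB A _ ih => simp [noKind] at ht ⊢; exact ⟨ht.1, ih ht.2⟩

lemma noKind_red {t t' : Tm} (h : Red t t') (ht : noKind t = true) : noKind t' = true := by
  induction h with
  | refl => exact ht
  | tail _ hs ih => exact noKind_step hs ih

lemma not_red_kind {t : Tm} (ht : noKind t = true) : ¬ Red t .kind := fun h => by
  simpa [noKind] using noKind_red h ht

lemma noKind_lift (d : ℕ) (t : Tm) : noKind (lift d t) = noKind t := by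
  rw [lift_eq_ren, noKind_ren]

lemma noKind_liftN (k : ℕ) (t : Tm) : noKind (liftN k t) = noKind t := by
  induction k with
  | zero => rfl
  | succ k ih => rw [liftN, Function.iterate_succ_apply', ← liftN, noKind_lift, ih]

lemma type_normal : Normal Tm.type := fun u h => by cases h
lemma kind_normal : Normal Tm.kind := fun u h => by cases h
/-! ### E. λΠ syntactic meta-lemmas -/

lemma typing_nokind {Γ t T} (h : Typing Γ t T) :
    noKind t = true ∧ (T = Tm.kind ∨ noKind T = true) ∧
      (∀ (n : ℕ) A, Γ[n]? = some A → noKind A = true) := by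
  induction h using Typing.rec
    (motive_1 := fun Γ _ => ∀ (n : ℕ) A, Γ[n]? = some A → noKind A = true) with
  | nil => rename_i n A h; simp at h
  | cons _ _ ih =>
      rename_i n A h
      cases n with
      | zero => simp at h; subst h; exact ih.1
      | succ n => exact ih.2.2 n A h
  | sort _ ih => exact ⟨rfl, Or.inl rfl, ih⟩
  | var _ hget ih =>
      refine ⟨rfl, Or.inr ?_, ih⟩
      rw [noKind_liftN]; exact ih _ _ hget
  | pi _ _ hs ihA ihB =>
      refine ⟨by simp [noKind, ihA.1, ihB.1], ?_, ihA.2.2⟩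
      rcases hs with h | h <;> subst h
      · exact Or.inr rfl
      · exact Or.inl rfl
  | lam _ _ _ ih1 ih3 =>
      have hpi : noKind (Tm.pi _ _) = true := ih1.1
      simp [noKind] at hpi
      exact ⟨by simp [noKind, hpi.1, ih3.1], Or.inr ih1.1, ih1.2.2⟩
  | app _ _ iht ihu =>
      rename_i A' B' h1 h2
      have hpi : noKind (Tm.pi A' B') = true := by
        rcases iht.2.1 with h | h
        · exact absurd h (by simp)
        · exact h
      simp [noKind] at hpi
      exact ⟨by simp [noKind, iht.1, ihu.1], Or.inr (noKind_subst0 hpi.2 ihu.1), iht.2.2⟩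
  | conv _ _ _ _ _ iht ihA ihB => exact ⟨iht.1, Or.inr ihB.1, iht.2.2⟩

lemma kind_not_typed {Γ T} (h : Typing Γ Tm.kind T) : False := by
  simpa [noKind] using (typing_nokind h).1

lemma kindsyn_type_kind {Γ A T} (h : Typing Γ A T) (hk : isKindB A = true) :
    T = Tm.kind := by
  induction h using Typing.rec (motive_1 := fun Γ _ => True) with
  | nil => trivial
  | cons _ _ _ => trivial
  | sort _ _ => rfl
  | var _ _ _ => simp [isKindB] at hk
  | pi _ _ hs ihA ihB =>
      simp only [isKindB] at hk
      exact ihB hk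
  | lam _ _ _ _ _ => simp [isKindB] at hk
  | app _ _ _ _ => simp [isKindB] at hk
  | conv h1 h2 _ _ _ ih1 _ _ =>
      rw [ih1 hk] at h2
      exact absurd h2 kind_not_typed

lemma type_sorted_not_kindsyn {Γ A} (h : Typing Γ A Tm.type) : isKindB A = false := by
  cases hk : isKindB A
  · rfl
  · exact absurd (kindsyn_type_kind h hk) (by simp)

lemma lift_ne_kind {d : ℕ} {t : Tm} (h : t ≠ Tm.kind) : lift d t ≠ Tm.kind := by
  cases t <;> simp [lift] <;> try exact h rfl
  split <;> simp

lemma liftN_ne_kind {k : ℕ} {t : Tm} (h : t ≠ Tm.kind) : liftN k t ≠ Tm.kind := by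
  induction k with
  | zero => exact h
  | succ k ih => rw [liftN, Function.iterate_succ_apply', ← liftN]; exact lift_ne_kind ih

lemma kind_sorted_kindsyn {Γ A T} (h : Typing Γ A T) (hT : T = Tm.kind) :
    isKindB A = true := by
  induction h using Typing.rec
    (motive_1 := fun Γ _ => ∀ (n : ℕ) A, Γ[n]? = some A → noKind A = true) with
  | nil => rename_i n A h; simp at h
  | cons h1 _ ih =>
      rename_i n A h
      cases n with
      | zero => simp at h; subst h; exact (typing_nokind h1).1
      | succ n => exact (typing_nokind h1).2.2 n A h
  | sort _ _ => rfl
  | var _ hget ih =>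
      exfalso
      refine liftN_ne_kind (t := _) ?_ hT
      intro he
      simpa [he, noKind] using ih _ _ hget
  | pi _ _ hs ihA ihB => simp only [isKindB]; exact ihB hT
  | lam _ _ _ _ _ => exact absurd hT (by simp)
  | @app Γ t u A B h1 h2 ih1 ih2 =>
      exfalso
      have hB : noKind B = true := by
        rcases (typing_nokind h1).2.1 with h | h
        · exact absurd h (by simp)
        · simp [noKind] at h; exact h.2
      have := noKind_subst0 hB (typing_nokind h2).1
      rw [hT] at this
      simp [noKind] at this
  | conv _ h2 h3 _ _ _ _ _ =>
      subst hT
      exact absurd h3 kind_not_typed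

lemma pi_inv {Γ X T} (h : Typing Γ X T) :
    ∀ A B, X = Tm.pi A B → Typing Γ A Tm.type ∧ ∃ s', IsSort s' ∧ Typing (A :: Γ) B s' := by
  induction h using Typing.rec (motive_1 := fun Γ _ => True) with
  | nil => trivial
  | cons _ _ _ => trivial
  | sort _ _ => intro A B h; exact absurd h (by simp)
  | var _ _ _ => intro A B h; exact absurd h (by simp)
  | pi h1 h2 hs _ _ =>
      intro A B he
      injection he with e1 e2
      subst e1; subst e2
      exact ⟨h1, _, hs, h2⟩
  | lam _ _ _ _ _ => intro A B h; exact absurd h (by simp)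
  | app _ _ _ _ => intro A B h; exact absurd h (by simp)
  | conv _ _ _ _ _ ih _ _ => exact ih
/-! ### F. Soundness of λΠ typing into SS -/

def entryCl (A : Tm) : Cl := if isKindB A then .f (kap A) else .o (nu A)
def clsCtx (Γ : List Tm) : List Cl := Γ.map entryCl

def clsOfT (T : Tm) : Cl :=
  if T = .kind then .kd else if isKindB T then .f (kap T) else .o (nu T)

@[simp] lemma clsOfT_type : clsOfT .type = .f .star := by simp [clsOfT, isKindB, kap]
@[simp] lemma clsOfT_kind : clsOfT .kind = .kd := by simp [clsOfT]

lemma nu_liftN (k : ℕ) (t : Tm) : nu (liftN k t) = nu t := by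
  induction k with
  | zero => rfl
  | succ k ih => rw [liftN, Function.iterate_succ_apply', ← liftN, nu_lift, ih]

lemma kap_liftN (k : ℕ) (t : Tm) : kap (liftN k t) = kap t := by
  induction k with
  | zero => rfl
  | succ k ih => rw [liftN, Function.iterate_succ_apply', ← liftN, kap_lift, ih]

lemma isKindB_liftN (k : ℕ) (t : Tm) : isKindB (liftN k t) = isKindB t := by
  induction k with
  | zero => rfl
  | succ k ih => rw [liftN, Function.iterate_succ_apply', ← liftN, isKindB_lift, ih]

lemma SS.weakenN (Δ : List Cl) {Γ : List Cl} {t : Tm} {c : Cl} (h : SS Γ t c) :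
    SS (Δ ++ Γ) (liftN Δ.length t) c := by
  induction Δ with
  | nil => exact h
  | cons c₀ Δ ih =>
      rw [show (c₀ :: Δ).length = Δ.length + 1 from rfl, liftN,
        Function.iterate_succ_apply', ← liftN]
      exact ih.weaken0

lemma clsCtx_kdfree (Γ : List Tm) : ∀ (n : ℕ) c, (clsCtx Γ)[n]? = some c → c ≠ .kd := by
  intro n c h
  rw [clsCtx, List.getElem?_map] at h
  cases hg : Γ[n]? with
  | none => rw [hg] at h; simp at h
  | some A =>
      rw [hg] at h; simp at h
      rw [← h]; unfold entryCl; split <;> simp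

lemma SS.kd_kindsyn {Γ : List Cl} {t : Tm} {c : Cl} (h : SS Γ t c) (hc : c = .kd)
    (hΓ : ∀ (n : ℕ) c', Γ[n]? = some c' → c' ≠ .kd) : isKindB t = true := by
  induction h with
  | type => rfl
  | var hget => exact absurd hc (hΓ _ _ hget)
  | appO _ _ _ _ => simp at hc
  | appF _ _ _ _ => simp at hc
  | lamO _ _ _ _ => simp at hc
  | lamF _ _ _ _ => simp at hc
  | piF _ _ _ _ => simp at hc
  | @piK Γ' A B _ _ _ ihB =>
      show isKindB B = true
      refine ihB rfl fun n c' hg => ?_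
      cases n with
      | zero => simp at hg; rw [← hg]; simp
      | succ n => exact hΓ n c' hg

theorem typing_ss {Γ t T} (h : Typing Γ t T) :
    SS (clsCtx Γ) t (clsOfT T) ∧
      (T = Tm.kind ∨ SS (clsCtx Γ) T .kd ∨ SS (clsCtx Γ) T (.f .star)) ∧
      (∀ (n : ℕ) A, Γ[n]? = some A → A ≠ Tm.kind ∧ SS (clsCtx (Γ.drop (n+1))) A
        (if isKindB A then Cl.kd else Cl.f .star)) := by
  induction h using Typing.rec
    (motive_1 := fun Γ _ => ∀ (n : ℕ) A, Γ[n]? = some A →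
      A ≠ Tm.kind ∧ SS (clsCtx (Γ.drop (n+1))) A
        (if isKindB A then Cl.kd else Cl.f .star)) with
  | nil => rename_i n A h; simp at h
  | cons h1 hs ih =>
      rename_i n A h
      cases n with
      | zero =>
          simp at h; subst h
          refine ⟨fun he => kind_not_typed (he ▸ h1), ?_⟩
          rcases hs with rfl | rfl
          · rw [if_neg (by rw [type_sorted_not_kindsyn h1]; simp)]
            simpa using ih.1
          · rw [if_pos (kind_sorted_kindsyn h1 rfl)]
            simpa using ih.1
      | succ n => exact ih.2.2 n A h
  | sort _ ih => exact ⟨by simpa using SS.type, Or.inl rfl, ih⟩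
  | @var Γ' n A _ hget ih =>
      obtain ⟨hAne, hSS⟩ := ih n A hget
      have hlen : n < Γ'.length := List.getElem?_eq_some_iff.mp hget |>.choose
      constructor
      · have e1 : clsOfT (liftN (n+1) A) = entryCl A := by
          unfold clsOfT entryCl
          rw [if_neg (liftN_ne_kind hAne), isKindB_liftN, kap_liftN, nu_liftN]
        rw [e1]
        refine SS.var ?_
        rw [clsCtx, List.getElem?_map, hget]; rfl
      · have hsplit : clsCtx Γ' = clsCtx (Γ'.take (n+1)) ++ clsCtx (Γ'.drop (n+1)) := by
          rw [clsCtx, clsCtx, clsCtx, ← List.map_append, List.take_append_drop]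
        have hlen2 : (clsCtx (Γ'.take (n+1))).length = n + 1 := by
          simp [clsCtx]; omega
        have hw := SS.weakenN (clsCtx (Γ'.take (n+1))) hSS
        rw [hlen2, ← hsplit] at hw
        by_cases hk : isKindB A = true
        · rw [if_pos hk] at hw; exact ⟨Or.inr (Or.inl hw), ih⟩
        · rw [if_neg hk] at hw; exact ⟨Or.inr (Or.inr hw), ih⟩
  | @pi Γ' A B s h1 h2 hs ihA ihB =>
      have hAk : isKindB A = false := type_sorted_not_kindsyn h1
      have hA : SS (clsCtx Γ') A (.f .star) := by simpa using ihA.1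
      have hctx : clsCtx (A :: Γ') = .o (nu A) :: clsCtx Γ' := by
        simp [clsCtx, entryCl, hAk]
      rcases hs with rfl | rfl
      · have hB : SS (.o (nu A) :: clsCtx Γ') B (.f .star) := by
          have := ihB.1; rw [hctx] at this; simpa using this
        exact ⟨by simpa using SS.piF hA hB, Or.inr (Or.inl SS.type), ihA.2.2⟩
      · have hB : SS (.o (nu A) :: clsCtx Γ') B .kd := by
          have := ihB.1; rw [hctx] at this; simpa using this
        exact ⟨by simpa using SS.piK hA hB, Or.inl rfl, ihA.2.2⟩
  | @lam Γ' A B b s h1 hs h3 ih1 ih3 =>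
      obtain ⟨hA_ty, s', hs', hB_ty⟩ := pi_inv h1 A B rfl
      have hAk : isKindB A = false := type_sorted_not_kindsyn hA_ty
      have hctx : clsCtx (A :: Γ') = .o (nu A) :: clsCtx Γ' := by
        simp [clsCtx, entryCl, hAk]
      have hBne : B ≠ Tm.kind := fun he => by
        subst he; exact kind_not_typed hB_ty
      have hpiK : Tm.pi A B ≠ Tm.kind := by simp
      have hbSS : SS (.o (nu A) :: clsCtx Γ') b (clsOfT B) := by
        have := ih3.1; rw [hctx] at this; exact this
      rcases hs with rfl | rfl
      · have hpi : SS (clsCtx Γ') (Tm.pi A B) (.f .star) := by simpa using ih1.1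
        cases hpi with
        | piF hA hB =>
            have hkB : isKindB B = false := by
              cases hk : isKindB B
              · rfl
              · exact absurd (isKindB_class hk hB) (by simp)
            have eB : clsOfT B = .o (nu B) := by simp [clsOfT, hBne, hkB]
            rw [eB] at hbSS
            refine ⟨?_, Or.inr (Or.inr (SS.piF hA hB)), ih1.2.2⟩
            have e : clsOfT (Tm.pi A B) = .o (.arr (nu A) (nu B)) := by
              simp [clsOfT, isKindB, hkB, nu]
            rw [e]
            exact SS.lamO hA hbSS
      · have hpi : SS (clsCtx Γ') (Tm.pi A B) .kd := by simpa using ih1.1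
        cases hpi with
        | piK hA hB =>
            have hkB : isKindB B = true := by
              refine hB.kd_kindsyn rfl fun n c' hg => ?_
              cases n with
              | zero => simp at hg; rw [← hg]; simp
              | succ n => exact clsCtx_kdfree Γ' n c' hg
            have eB : clsOfT B = .f (kap B) := by simp [clsOfT, hBne, hkB]
            rw [eB] at hbSS
            refine ⟨?_, Or.inr (Or.inl (SS.piK hA hB)), ih1.2.2⟩
            have e : clsOfT (Tm.pi A B) = .f (.karr (nu A) (kap B)) := by
              simp [clsOfT, isKindB, hkB, kap]
            rw [e]
            exact SS.lamF hA hbSS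
  | @app Γ' t' u A B h1 h2 ih1 ih2 =>
      have hnkB : noKind B = true := by
        rcases (typing_nokind h1).2.1 with h | h
        · exact absurd h (by simp)
        · simp [noKind] at h; exact h.2
      have hnku : noKind u = true := (typing_nokind h2).1
      have hsub_ne : subst 0 u B ≠ Tm.kind := fun he => by
        have := noKind_subst0 hnkB hnku
        rw [he] at this; simp [noKind] at this
      rcases ih1.2.1 with hk | hpi | hpi
      · exact absurd hk (by simp)
      · -- pi A B : kd
        cases hpi with
        | piK hA hB =>
            have hAk : isKindB A = false := by
              cases hk : isKindB A
              · rfl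
              · exact absurd (isKindB_class hk hA) (by simp)
            have hAne : A ≠ Tm.kind := fun he => by rw [he] at hA; cases hA
            have hu : SS (clsCtx Γ') u (.o (nu A)) := by
              have := ih2.1
              rw [show clsOfT A = .o (nu A) by simp [clsOfT, hAne, hAk]] at this
              exact this
            have hkB : isKindB B = true := by
              refine hB.kd_kindsyn rfl fun n c' hg => ?_
              cases n with
              | zero => simp at hg; rw [← hg]; simp
              | succ n => exact clsCtx_kdfree Γ' n c' hg
            have e : clsOfT (Tm.pi A B) = .f (.karr (nu A) (kap B)) := by
              simp [clsOfT, isKindB, hkB, kap]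
            have happ : SS (clsCtx Γ') (Tm.app t' u) (.f (kap B)) :=
              SS.appF (e ▸ ih1.1) hu
            obtain ⟨i1, i2, i3⟩ := nu_subst_inv hB [] (clsCtx Γ') (nu A) u rfl trivial
            simp only [List.length_nil] at i1 i2 i3
            refine ⟨?_, Or.inr (Or.inl (hB.subst0 hu)), ih1.2.2⟩
            rw [show clsOfT (subst 0 u B) = .f (kap B) by
              simp [clsOfT, hsub_ne, i3, hkB, i2]]
            exact happ
      · -- pi A B : f *
        cases hpi with
        | piF hA hB =>
            have hAk : isKindB A = false := by
              cases hk : isKindB A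
              · rfl
              · exact absurd (isKindB_class hk hA) (by simp)
            have hAne : A ≠ Tm.kind := fun he => by rw [he] at hA; cases hA
            have hu : SS (clsCtx Γ') u (.o (nu A)) := by
              have := ih2.1
              rw [show clsOfT A = .o (nu A) by simp [clsOfT, hAne, hAk]] at this
              exact this
            have hkB : isKindB B = false := by
              cases hk : isKindB B
              · rfl
              · exact absurd (isKindB_class hk hB) (by simp)
            have e : clsOfT (Tm.pi A B) = .o (.arr (nu A) (nu B)) := by
              simp [clsOfT, isKindB, hkB, nu]
            have happ : SS (clsCtx Γ') (Tm.app t' u) (.o (nu B)) :=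
              SS.appO (e ▸ ih1.1) hu
            obtain ⟨i1, i2, i3⟩ := nu_subst_inv hB [] (clsCtx Γ') (nu A) u rfl trivial
            simp only [List.length_nil] at i1 i2 i3
            refine ⟨?_, Or.inr (Or.inr (hB.subst0 hu)), ih1.2.2⟩
            rw [show clsOfT (subst 0 u B) = .o (nu B) by
              simp [clsOfT, hsub_ne, i3, hkB, i1]]
            exact happ
  | @conv Γ' t' A B s h1 h2 h3 hs hconv ih1 ih2 ih3 =>
      have hAne : A ≠ Tm.kind := fun he => by subst he; exact kind_not_typed h2
      have hBne : B ≠ Tm.kind := fun he => by subst he; exact kind_not_typed h3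
      obtain ⟨C, hAC, hBC⟩ := conv_join hconv
      rcases hs with rfl | rfl
      · have hA : SS (clsCtx Γ') A (.f .star) := by simpa using ih2.1
        have hB : SS (clsCtx Γ') B (.f .star) := by simpa using ih3.1
        have hAk : isKindB A = false := by
          cases hk : isKindB A
          · rfl
          · exact absurd (isKindB_class hk hA) (by simp)
        have hBk : isKindB B = false := by
          cases hk : isKindB B
          · rfl
          · exact absurd (isKindB_class hk hB) (by simp)
        have hnu : nu A = nu B := by
          have e1 := (nu_red hAC hA trivial).1
          have e2 := (nu_red hBC hB trivial).1
          rw [← e1, ← e2]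
        have e : clsOfT A = clsOfT B := by simp [clsOfT, hAne, hBne, hAk, hBk, hnu]
        exact ⟨e ▸ ih1.1, Or.inr (Or.inr hB), ih1.2.2⟩
      · have hA : SS (clsCtx Γ') A .kd := by simpa using ih2.1
        have hB : SS (clsCtx Γ') B .kd := by simpa using ih3.1
        have hAk : isKindB A = true :=
          hA.kd_kindsyn rfl (clsCtx_kdfree Γ')
        have hBk : isKindB B = true :=
          hB.kd_kindsyn rfl (clsCtx_kdfree Γ')
        have hkap : kap A = kap B := by
          have e1 := (nu_red hAC hA trivial).2.1
          have e2 := (nu_red hBC hB trivial).2.1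
          rw [← e1, ← e2]
        have e : clsOfT A = clsOfT B := by simp [clsOfT, hAne, hBne, hAk, hBk, hkap]
        exact ⟨e ▸ ih1.1, Or.inr (Or.inl hB), ih1.2.2⟩
/-! ### G. Strong normalization via reducibility -/

def SN (t : Tm) : Prop := Acc (fun a b : Tm => Step b a) t

lemma normal_sn {t : Tm} (h : Normal t) : SN t :=
  ⟨t, fun y hy => absurd hy (h y)⟩

lemma var_normal (n : ℕ) : Normal (.var n) := fun u h => by cases h

lemma sn_app_left {t u : Tm} (h : SN (.app t u)) : SN t := by
  generalize hx : Tm.app t u = x at h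
  induction h generalizing t u with
  | intro x _ ih =>
      subst hx
      exact ⟨t, fun y hy => ih _ (Step.appL u hy) rfl⟩

lemma acc_sim {f : Tm → Tm} (hf : ∀ {x y : Tm}, Step x y → Step (f x) (f y))
    {b : Tm} (h : SN (f b)) : SN b := by
  generalize hx : f b = x at h
  induction h generalizing b with
  | intro x _ ih =>
      subst hx
      exact ⟨b, fun y hy => ih _ (hf hy) rfl⟩

lemma step_msubst {b b' : Tm} (σ : ℕ → Tm) (h : Step b b') :
    Step (msubst σ b) (msubst σ b') := by
  induction h generalizing σ with
  | beta A b u =>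
      rw [msubst_subst0]
      exact Step.beta (msubst σ A) (msubst (up σ) b) (msubst σ u)
  | appL u _ ih => exact Step.appL _ (ih σ)
  | appR t _ ih => exact Step.appR _ (ih σ)
  | lamA b _ ih => exact Step.lamA _ (ih σ)
  | lamB A _ ih => exact Step.lamB _ (ih (up σ))
  | piA B _ ih => exact Step.piA _ (ih σ)
  | piB A _ ih => exact Step.piB _ (ih (up σ))

lemma step_subst {b b' : Tm} (k : ℕ) (u : Tm) (h : Step b b') :
    Step (subst k u b) (subst k u b') := by
  rw [subst_eq_msubst, subst_eq_msubst]; exact step_msubst _ h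

lemma sn_pi {A B : Tm} (hA : SN A) (hB : SN B) : SN (.pi A B) := by
  induction hA generalizing B with
  | intro A _ ihA =>
      induction hB with
      | intro B hBacc ihB =>
          refine ⟨_, fun y hy => ?_⟩
          cases hy with
          | piA _ hs => exact ihA _ hs ⟨B, hBacc⟩
          | piB _ hs => exact ihB _ hs

def Ne (t : Tm) : Prop := ∀ A b, t ≠ Tm.lam A b

structure Cand (R : Tm → Prop) : Prop where
  cr1 : ∀ t, R t → SN t
  cr2 : ∀ t t', R t → Step t t' → R t'
  cr3 : ∀ t, Ne t → (∀ t', Step t t' → R t') → R t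

lemma cand_var {R : Tm → Prop} (c : Cand R) (n : ℕ) : R (.var n) :=
  c.cr3 _ (fun A b h => by cases h) (fun t' h => by cases h)

lemma cand_sn : Cand SN where
  cr1 := fun t h => h
  cr2 := fun t t' h hs => h.inv hs
  cr3 := fun t _ h => ⟨t, fun y hy => h y hy⟩

def RedO : SK → Tm → Prop
  | .iota, t => SN t
  | .arr σ τ, t => ∀ u, RedO σ u → RedO τ (.app t u)

def RedK : KK → Tm → Prop
  | .star, t => SN t
  | .karr σ κ, t => ∀ u, RedO σ u → RedK κ (.app t u)

def RedC : Cl → Tm → Prop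
  | .o σ, t => RedO σ t
  | .f κ, t => RedK κ t
  | .kd, t => SN t

lemma candO (σ : SK) : Cand (RedO σ) := by
  induction σ with
  | iota => exact cand_sn
  | arr σ τ ihσ ihτ =>
      refine ⟨?_, ?_, ?_⟩
      · intro t ht
        have hv : RedO σ (.var 0) := cand_var ihσ 0
        exact sn_app_left (ihτ.cr1 _ (ht _ hv))
      · intro t t' ht hs u hu
        exact ihτ.cr2 _ _ (ht u hu) (Step.appL u hs)
      · intro t hne h u hu
        have hsnu : SN u := ihσ.cr1 _ hu
        induction hsnu with
        | intro u _ ihu =>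
            refine ihτ.cr3 _ (fun A b hh => by cases hh) ?_
            intro w hw
            cases hw with
            | beta A b u => exact absurd rfl (hne A b)
            | appL _ hs => exact h _ hs _ hu
            | appR _ hs =>
                rename_i u' 
                exact ihu _ hs (ihσ.cr2 _ _ hu hs)

lemma candK (κ : KK) : Cand (RedK κ) := by
  induction κ with
  | star => exact cand_sn
  | karr σ κ ihκ =>
      have ihσ := candO σ
      refine ⟨?_, ?_, ?_⟩
      · intro t ht
        have hv : RedO σ (.var 0) := cand_var ihσ 0
        exact sn_app_left (ihκ.cr1 _ (ht _ hv))
      · intro t t' ht hs u hu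
        exact ihκ.cr2 _ _ (ht u hu) (Step.appL u hs)
      · intro t hne h u hu
        have hsnu : SN u := ihσ.cr1 _ hu
        induction hsnu with
        | intro u _ ihu =>
            refine ihκ.cr3 _ (fun A b hh => by cases hh) ?_
            intro w hw
            cases hw with
            | beta A b u => exact absurd rfl (hne A b)
            | appL _ hs => exact h _ hs _ hu
            | appR _ hs => exact ihu _ hs (ihσ.cr2 _ _ hu hs)

lemma candC (c : Cl) : Cand (RedC c) := by
  cases c with
  | o σ => exact candO σ
  | f κ => exact candK κ
  | kd => exact cand_sn

lemma beta_expand {R S : Tm → Prop} (cR : Cand R) (cS : Cand S) :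
    ∀ A, SN A → ∀ b, SN b → ∀ u,
      (∀ v, R v → S (subst 0 v b)) → R u → S (.app (.lam A b) u) := by
  intro A hA
  induction hA with
  | intro A _ ihA =>
      intro b hb
      induction hb with
      | intro b hbacc ihb =>
          intro u hsub hu
          have hsnu : SN u := cR.cr1 _ hu
          induction hsnu with
          | intro u _ ihu =>
              refine cS.cr3 _ (fun X y hh => by cases hh) ?_
              intro w hw
              cases hw with
              | beta => exact hsub _ hu
              | appL _ hs =>
                  cases hs with
                  | lamA _ hsA =>
                      refine ihA _ hsA b ⟨b, fun y hy => hbacc y hy⟩ u hsub hu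
                  | lamB _ hsB =>
                      rename_i b'
                      exact ihb _ hsB u
                        (fun v hv => cS.cr2 _ _ (hsub v hv) (step_subst 0 v hsB)) hu
              | appR _ hs =>
                  rename_i u'
                  exact ihu _ hs (cR.cr2 _ _ hu hs)

def scons (v : Tm) (θ : ℕ → Tm) : ℕ → Tm
  | 0 => v
  | n+1 => θ n

lemma msubst_scons (v : Tm) (θ : ℕ → Tm) (b : Tm) :
    msubst (scons v θ) b = subst 0 v (msubst (up θ) b) := by
  rw [subst_eq_msubst, msubst_msubst]
  refine msubst_ext b fun n => ?_
  cases n with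
  | zero => simp [up, sub1, msubst, scons]
  | succ n =>
      simp only [up_succ, lift_zero_eq, msubst_ren, scons]
      rw [show (fun m => sub1 0 v (Nat.succ m)) = fun m => Tm.var m by
        funext m; simp [sub1]]
      exact (msubst_id (θ n)).symm

def RedSub (Γ : List Cl) (θ : ℕ → Tm) : Prop :=
  ∀ (n : ℕ) c, Γ[n]? = some c → RedC c (θ n)

theorem ss_fund {Γ : List Cl} {t : Tm} {c : Cl} (h : SS Γ t c) :
    ∀ θ, RedSub Γ θ → RedC c (msubst θ t) := by
  induction h with
  | type => intro θ hθ; exact normal_sn type_normal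
  | var hget => intro θ hθ; exact hθ _ _ hget
  | appO _ _ iht ihu => intro θ hθ; exact iht θ hθ _ (ihu θ hθ)
  | appF _ _ iht ihu => intro θ hθ; exact iht θ hθ _ (ihu θ hθ)
  | @lamO Γ' A b τ hA hb ihA ihb =>
      intro θ hθ
      intro u hu
      have hsub : ∀ v, RedO (nu A) v → RedO τ (subst 0 v (msubst (up θ) b)) := by
        intro v hv
        rw [← msubst_scons]
        refine ihb (scons v θ) ?_
        intro n c hget
        cases n with
        | zero => simp at hget; rw [← hget]; exact hv
        | succ n => exact hθ n c hget
      have hASN : SN (msubst θ A) := ihA θ hθ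
      have hbSN : SN (msubst (up θ) b) := by
        refine acc_sim (f := fun x => subst 0 (.var 0) x) (fun {x y} hs => step_subst 0 _ hs) ?_
        exact (candO τ).cr1 _ (hsub _ (cand_var (candO (nu A)) 0))
      exact beta_expand (candO (nu A)) (candO τ) _ hASN _ hbSN _ hsub hu
  | @lamF Γ' A b κ hA hb ihA ihb =>
      intro θ hθ
      intro u hu
      have hsub : ∀ v, RedO (nu A) v → RedK κ (subst 0 v (msubst (up θ) b)) := by
        intro v hv
        rw [← msubst_scons]
        refine ihb (scons v θ) ?_
        intro n c hget
        cases n with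
        | zero => simp at hget; rw [← hget]; exact hv
        | succ n => exact hθ n c hget
      have hASN : SN (msubst θ A) := ihA θ hθ
      have hbSN : SN (msubst (up θ) b) := by
        refine acc_sim (f := fun x => subst 0 (.var 0) x) (fun {x y} hs => step_subst 0 _ hs) ?_
        exact (candK κ).cr1 _ (hsub _ (cand_var (candO (nu A)) 0))
      exact beta_expand (candO (nu A)) (candK κ) _ hASN _ hbSN _ hsub hu
  | @piF Γ' A B hA hB ihA ihB =>
      intro θ hθ
      have hASN : SN (msubst θ A) := ihA θ hθ
      have hBSN : SN (msubst (up θ) B) := by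
        refine acc_sim (f := fun x => subst 0 (.var 0) x) (fun {x y} hs => step_subst 0 _ hs) ?_
        have : RedC (.f .star) (msubst (scons (.var 0) θ) B) := by
          refine ihB (scons (.var 0) θ) ?_
          intro n c hget
          cases n with
          | zero => simp at hget; rw [← hget]; exact cand_var (candO (nu A)) 0
          | succ n => exact hθ n c hget
        rw [msubst_scons] at this
        exact this
      exact sn_pi hASN hBSN
  | @piK Γ' A B hA hB ihA ihB =>
      intro θ hθ
      have hASN : SN (msubst θ A) := ihA θ hθ
      have hBSN : SN (msubst (up θ) B) := by
        refine acc_sim (f := fun x => subst 0 (.var 0) x) (fun {x y} hs => step_subst 0 _ hs) ?_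
        have : RedC .kd (msubst (scons (.var 0) θ) B) := by
          refine ihB (scons (.var 0) θ) ?_
          intro n c hget
          cases n with
          | zero => simp at hget; rw [← hget]; exact cand_var (candO (nu A)) 0
          | succ n => exact hθ n c hget
        rw [msubst_scons] at this
        exact this
      exact sn_pi hASN hBSN

theorem ss_sn {Γ : List Cl} {t : Tm} {c : Cl} (h : SS Γ t c) : SN t := by
  have := ss_fund h (fun n => .var n) (fun n c hget => cand_var (candC c) n)
  rw [msubst_id] at this
  exact (candC c).cr1 _ this

theorem typing_sn {Γ : List Tm} {t T : Tm} (h : Typing Γ t T) : SN t :=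
  ss_sn (typing_ss h).1
/-! ### H. Assembly -/

lemma exists_nf {t : Tm} (h : SN t) : ∃ v, Red t v ∧ Normal v := by
  induction h with
  | intro t _ ih =>
      by_cases hx : ∃ u, Step t u
      · obtain ⟨u, hu⟩ := hx
        obtain ⟨v, hv, hnv⟩ := ih u hu
        exact ⟨v, Relation.ReflTransGen.head hu hv, hnv⟩
      · exact ⟨t, Relation.ReflTransGen.refl, fun u hu => hx ⟨u, hu⟩⟩

lemma red_to_normal {t v w : Tm} (hv : Red t v) (hnv : Normal v) (hw : Red t w) :
    Red w v := by
  obtain ⟨z, h1, h2⟩ := red_confluent hv hw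
  rwa [red_normal_eq h1 hnv] at h2

end LamPi

namespace LamPi

/-- β-reduction on well-typed terms is strongly normalizing and
confluent; hence normal forms are unique, and two well-typed terms of the same
type are β-equivalent iff they have the same normal form. -/
theorem sn_confluence_unique_nf :
    (∀ (Γ : List Tm) (t T : Tm), Typing Γ t T → Acc (fun a b : Tm => Step b a) t) ∧
    (∀ (Γ : List Tm) (t T u v : Tm), Typing Γ t T → Red t u → Red t v →
        ∃ w, Red u w ∧ Red v w) ∧
    (∀ (Γ : List Tm) (t T u v : Tm), Typing Γ t T →
        Red t u → Normal u → Red t v → Normal v → u = v) ∧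
    (∀ (Γ : List Tm) (t t' T : Tm), Typing Γ t T → Typing Γ t' T →
        (Conv t t' ↔ ∃ v, Red t v ∧ Normal v ∧ Red t' v)) := by
  refine ⟨fun Γ t T h => typing_sn h,
    fun Γ t T u v _ hu hv => red_confluent hu hv,
    fun Γ t T u v _ hu hnu hv hnv => ?_,
    fun Γ t t' T ht ht' => ⟨fun hc => ?_, fun ⟨v, h1, _, h2⟩ => ?_⟩⟩
  · exact (red_normal_eq (red_to_normal hv hnv hu) hnu).symm
  · obtain ⟨v, hv, hnv⟩ := exists_nf (typing_sn ht)
    obtain ⟨w, htw, ht'w⟩ := conv_join hc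
    have : Red w v := red_to_normal hv hnv htw
    exact ⟨v, hv, hnv, ht'w.trans this⟩
  · exact Relation.EqvGen.trans _ _ _ (conv_of_red h1)
      (Relation.EqvGen.symm _ _ (conv_of_red h2))

end LamPi
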